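/- Let (A, ·, α) be a left Hom-pre-Jacobi-Jordan algebra over a field K of characteristic 0 with α bijective, and let (V, ρ, λ, φ) be a representation of (A, ·, α) with φ invertible. Define ρ̃, λ̃ : A → End(V*) on the dual space V* by (ρ̃(x)ξ)(u) := ξ(ρ(α(x))(φ⁻²(u))) and (λ̃(x)ξ)(u) := ξ(λ(α(x))(φ⁻²(u))) for x ∈ A, ξ ∈ V*, u ∈ V. Then (V*, ρ̃+λ̃, −λ̃, (φ⁻¹)*) is a representation of the left Hom-pre-Jacobi-Jordan algebra (A, ·, α), where (φ⁻¹)* denotes the transpose of φ⁻¹. -/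
import Mathlib


/-- A left Hom-pre-Jacobi-Jordan algebra structure: the multiplication is bilinear,
the structure map is multiplicative, and the anti-Hom-associator is left skew-symmetric. -/
def IsHomPreJJ {K A : Type*} [Field K] [AddCommGroup A] [Module K A]
    (mul : A → A → A) (α : A →ₗ[K] A) : Prop :=
  (∀ x y z : A, mul (x + y) z = mul x z + mul y z) ∧
  (∀ (c : K) (x y : A), mul (c • x) y = c • mul x y) ∧
  (∀ x y z : A, mul x (y + z) = mul x y + mul x z) ∧
  (∀ (c : K) (x y : A), mul x (c • y) = c • mul x y) ∧
  (∀ x y : A, α (mul x y) = mul (α x) (α y)) ∧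
  (∀ x y z : A, mul (mul x y) (α z) + mul (α x) (mul y z)
      = -mul (mul y x) (α z) - mul (α y) (mul x z))

/-- A representation (W, ρ, λ, φ) of a left Hom-pre-Jacobi-Jordan algebra
(A, mul, α), with ρ and λ valued in endomorphisms of W. -/
def IsPreRepE {K A W : Type*} [Field K] [AddCommGroup A] [Module K A]
    [AddCommGroup W] [Module K W]
    (mul : A → A → A) (α : A →ₗ[K] A) (ρ lam : A → Module.End K W)
    (φ : Module.End K W) : Prop :=
  (∀ x y : A, ρ (x + y) = ρ x + ρ y) ∧
  (∀ (c : K) (x : A), ρ (c • x) = c • ρ x) ∧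
  (∀ x y : A, lam (x + y) = lam x + lam y) ∧
  (∀ (c : K) (x : A), lam (c • x) = c • lam x) ∧
  (∀ (x : A) (w : W), φ (ρ x w) = ρ (α x) (φ w)) ∧
  (∀ (x y : A) (w : W),
      ρ (mul x y + mul y x) (φ w) = -ρ (α x) (ρ y w) - ρ (α y) (ρ x w)) ∧
  (∀ (x : A) (w : W), φ (lam x w) = lam (α x) (φ w)) ∧
  (∀ (x y : A) (w : W),
      lam (α y) (lam x w) + lam (mul x y) (φ w)
        = -lam (α y) (ρ x w) - ρ (α x) (lam y w))

/-- If (A, ·, α) is a left Hom-pre-Jacobi-Jordan algebra with α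
bijective and (V, ρ, λ, φ) a representation with φ invertible, then
(V*, ρ̃+λ̃, −λ̃, (φ⁻¹)*) is a representation of (A, ·, α), where
(ρ̃(x)ξ)(u) := ξ(ρ(α x)(φ⁻²(u))) and (λ̃(x)ξ)(u) := ξ(λ(α x)(φ⁻²(u))). -/
theorem stmt_19 {K A V : Type*} [Field K] [CharZero K]
    [AddCommGroup A] [Module K A] [AddCommGroup V] [Module K V]
    (mul : A → A → A) (α : A →ₗ[K] A)
    (hA : IsHomPreJJ mul α) (hα : Function.Bijective α)
    (ρ lam : A → Module.End K V) (φ : V ≃ₗ[K] V)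
    (hrep : IsPreRepE mul α ρ lam φ.toLinearMap) :
    IsPreRepE mul α
      (fun x =>
        LinearMap.dualMap (ρ (α x) ∘ₗ (φ.symm.toLinearMap ∘ₗ φ.symm.toLinearMap)) +
        LinearMap.dualMap (lam (α x) ∘ₗ (φ.symm.toLinearMap ∘ₗ φ.symm.toLinearMap)))
      (fun x =>
        -LinearMap.dualMap (lam (α x) ∘ₗ (φ.symm.toLinearMap ∘ₗ φ.symm.toLinearMap)))
      (LinearMap.dualMap φ.symm.toLinearMap) := by
  
  obtain ⟨h1,h2,h3,h4,h5,h6,h7,h8⟩ := hrep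
  have hρs : ∀ (x : A) (v : V), φ.symm (ρ (α x) v) = ρ x (φ.symm v) := by
    intro x v
    apply φ.injective
    rw [φ.apply_symm_apply]
    exact ((h5 x (φ.symm v)).trans (by simp)).symm
  have hls : ∀ (x : A) (v : V), φ.symm (lam (α x) v) = lam x (φ.symm v) := by
    intro x v
    apply φ.injective
    rw [φ.apply_symm_apply]
    exact ((h7 x (φ.symm v)).trans (by simp)).symm
  refine ⟨?_, ?_, ?_, ?_, ?_, ?_, ?_, ?_⟩
  · intro x y; ext w v
    simp only [map_add, h1, h3, LinearMap.add_apply, LinearMap.dualMap_apply, LinearMap.coe_comp,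
      Function.comp_apply, LinearEquiv.coe_coe, LinearMap.coe_mk]
    ring
  · intro c x; ext w v
    simp only [map_smul, h2, h4, LinearMap.add_apply, LinearMap.smul_apply,
      LinearMap.dualMap_apply, LinearMap.coe_comp, Function.comp_apply, LinearEquiv.coe_coe,
      map_smul, smul_eq_mul]
    ring
  · intro x y; ext w v
    simp only [map_add, h1, h3, LinearMap.add_apply, LinearMap.neg_apply,
      LinearMap.dualMap_apply, LinearMap.coe_comp, Function.comp_apply, LinearEquiv.coe_coe]
    ring
  · intro c x; ext w v
    simp only [map_smul, h2, h4, LinearMap.neg_apply, LinearMap.smul_apply,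
      LinearMap.dualMap_apply, LinearMap.coe_comp, Function.comp_apply, LinearEquiv.coe_coe,
      map_smul, smul_eq_mul]
    ring
  · intro x w; ext v
    simp only [LinearMap.add_apply, LinearMap.neg_apply, LinearMap.dualMap_apply,
      LinearMap.coe_comp, Function.comp_apply, LinearEquiv.coe_coe, map_add, map_neg,
      LinearMap.sub_apply, hρs, hls]
  · intro x y w; ext v
    simp only [h1, h3, LinearMap.add_apply, LinearMap.neg_apply, LinearMap.dualMap_apply,
      LinearMap.coe_comp, Function.comp_apply, LinearEquiv.coe_coe, map_add, map_neg,
      LinearMap.sub_apply, hρs, hls]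
    have e1 := congrArg w (h6 x y (φ.symm (φ.symm (φ.symm (φ.symm v)))))
    have e2 := congrArg w (h8 x y (φ.symm (φ.symm (φ.symm (φ.symm v)))))
    have e3 := congrArg w (h8 y x (φ.symm (φ.symm (φ.symm (φ.symm v)))))
    simp only [h1, h3, LinearMap.add_apply, map_add, map_neg, map_sub, LinearEquiv.coe_coe,
      LinearEquiv.apply_symm_apply] at e1 e2 e3
    linear_combination e1 + e2 + e3
  · intro x w; ext v
    simp only [LinearMap.neg_apply, LinearMap.dualMap_apply,
      LinearMap.coe_comp, Function.comp_apply, LinearEquiv.coe_coe, map_add, map_neg,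
      LinearMap.sub_apply, hρs, hls]
  · intro x y w; ext v
    simp only [LinearMap.add_apply, LinearMap.neg_apply, LinearMap.dualMap_apply,
      LinearMap.coe_comp, Function.comp_apply, LinearEquiv.coe_coe, map_add, map_neg,
      LinearMap.sub_apply, hρs, hls]
    have e2 := congrArg w (h8 x y (φ.symm (φ.symm (φ.symm (φ.symm v)))))
    simp only [map_add, map_neg, map_sub, LinearEquiv.coe_coe,
      LinearEquiv.apply_symm_apply] at e2
    linear_combination -e2
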